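/- A bi-directed graph G is Markov equivalent to some undirected graph if and only if its simplicial graph G^s is an undirected graph, which holds if and only if G is a disjoint union of complete bi-directed graphs. -/

import Mathlib

/-- Possible edge types between an ordered pair of distinct vertices of a
simple mixed graph.  `arrowTo` at `(v, w)` means `v → w`, `arrowFrom` means
`v ← w`, `undir` means `v − w` and `bidir` means `v ↔ w`. -/
inductive EType : Type
  | none | undir | arrowTo | arrowFrom | bidir
deriving DecidableEq

/-- The edge type seen from the reversed ordered pair of vertices. -/
def EType.mirror : EType → EType
  | .none => .none
  | .undir => .undir
  | .arrowTo => .arrowFrom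
  | .arrowFrom => .arrowTo
  | .bidir => .bidir

/-- A simple mixed graph: at most one edge (undirected, directed or
bi-directed) between any two distinct vertices, and no self loops. -/
structure MixedGraph (V : Type) where
  E : V → V → EType
  no_loop : ∀ v, E v v = .none
  symm : ∀ v w, E w v = (E v w).mirror

/-- `(a, b, c)` are three consecutive vertices on the path `p`. -/
def ConsecTriple {V : Type} (p : List V) (a b c : V) : Prop :=
  ∃ l1 l2, p = l1 ++ a :: b :: c :: l2

namespace MixedGraph

variable {V : Type} (G : MixedGraph V)

/-- `v − w` is an edge of `G`. -/
def Undir (v w : V) : Prop := G.E v w = .undir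

/-- `v → w` is an edge of `G`. -/
def Dir (v w : V) : Prop := G.E v w = .arrowTo

/-- `v ↔ w` is an edge of `G`. -/
def Bidir (v w : V) : Prop := G.E v w = .bidir

/-- `v` and `w` are adjacent (joined by some edge). -/
def Adj (v w : V) : Prop := G.E v w ≠ .none

/-- The edge between `a` and `b` has an arrowhead at `b`. -/
def HeadAt (a b : V) : Prop := G.E a b = .arrowTo ∨ G.E a b = .bidir

/-- Closed boundary: `v` together with its adjacent vertices. -/
def Bd (v : V) : Set V := insert v {w | G.Adj v w}

/-- A set of vertices is complete if all of its pairs of distinct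
vertices are adjacent. -/
def Complete (S : Set V) : Prop := ∀ v ∈ S, ∀ w ∈ S, v ≠ w → G.Adj v w

/-- A vertex is simplicial if its closed boundary is complete. -/
def Simplicial (v : V) : Prop := G.Complete (G.Bd v)

/-- `v` is an ancestor of `w`: `v = w` or there is a directed path from
`v` to `w`. -/
def Anc (v w : V) : Prop := Relation.ReflTransGen G.Dir v w

/-- The set of ancestors of vertices in `C`. -/
def anSet (C : Set V) : Set V := {v | ∃ c ∈ C, G.Anc v c}

/-- `G` is an ancestral graph. -/
def Ancestral : Prop :=
  (∀ v w, G.Dir v w → ¬ G.Anc w v) ∧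
  (∀ v w, G.Undir v w → ∀ u, ¬ G.HeadAt u v) ∧
  (∀ v w, G.Bidir v w → ¬ G.Anc v w)

/-- The boundary containment property. -/
def BdContain : Prop :=
  (∀ v w, G.Undir v w → G.Bd v = G.Bd w) ∧
  (∀ v w, G.Dir v w → G.Bd v ⊆ G.Bd w)

/-- `b` is a collider between consecutive neighbours `a` and `c`. -/
def Collider (a b c : V) : Prop := G.HeadAt a b ∧ G.HeadAt c b

/-- A path: a list of distinct vertices, consecutive ones adjacent. -/
def IsPath (p : List V) : Prop := p.Nodup ∧ p.Chain' G.Adj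

/-- `p` is an m-connecting path given `C`: every non-collider on it is
outside `C` and every collider on it is an ancestor of `C`. -/
def IsMConnPath (C : Set V) (p : List V) : Prop :=
  G.IsPath p ∧
  ∀ a b c, ConsecTriple p a b c →
    (G.Collider a b c → b ∈ G.anSet C) ∧ (¬ G.Collider a b c → b ∉ C)

/-- `v` and `w` are m-connected given `C`. -/
def MConn (v w : V) (C : Set V) : Prop :=
  ∃ p, G.IsMConnPath C p ∧ p.head? = some v ∧ p.getLast? = some w

/-- `v` and `w` are m-separated given `C`. -/
def MSep (v w : V) (C : Set V) : Prop := ¬ G.MConn v w C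

/-- A maximal (ancestral) graph: every pair of distinct non-adjacent
vertices is m-separated given some set. -/
def Maximal : Prop :=
  ∀ v w, v ≠ w → ¬ G.Adj v w → ∃ C : Set V, v ∉ C ∧ w ∉ C ∧ G.MSep v w C

/-- `G` is a bi-directed graph. -/
def Bidirected : Prop := ∀ v w, G.E v w = .none ∨ G.E v w = .bidir

/-- `G` is an undirected graph. -/
def UndirectedG : Prop := ∀ v w, G.E v w = .none ∨ G.E v w = .undir

/-- `G` is a directed acyclic graph. -/
def IsDAG : Prop :=
  (∀ v w, G.E v w = .none ∨ G.E v w = .arrowTo ∨ G.E v w = .arrowFrom) ∧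
  (∀ v w, G.Dir v w → ¬ G.Anc w v)

/-- `G` and `H` have the same skeleton. -/
def SameSkeleton (H : MixedGraph V) : Prop := ∀ v w, G.Adj v w ↔ H.Adj v w

/-- `G` and `H` are Markov equivalent: their m-separation relations
coincide. -/
def MarkovEquiv (H : MixedGraph V) : Prop :=
  ∀ v w (C : Set V), v ≠ w → v ∉ C → w ∉ C → (G.MSep v w C ↔ H.MSep v w C)

open Classical in
/-- The edge map obtained from `G` by dropping all arrowheads at
simplicial vertices. -/
noncomputable def dropE (v w : V) : EType :=
  match G.E v w with
  | .none => .none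
  | .undir => .undir
  | .arrowTo => if G.Simplicial w then .undir else .arrowTo
  | .arrowFrom => if G.Simplicial v then .undir else .arrowFrom
  | .bidir =>
      if G.Simplicial v then (if G.Simplicial w then .undir else .arrowTo)
      else (if G.Simplicial w then .arrowFrom else .bidir)

/-- The graph obtained from `G` by dropping all arrowheads at simplicial
vertices; for a bi-directed graph `G` this is the simplicial graph `Gˢ`. -/
noncomputable def drop : MixedGraph V where
  E := G.dropE
  no_loop v := by simp [dropE, G.no_loop]
  symm v w := by
    unfold dropE
    rw [G.symm v w]
    cases h : G.E v w <;>
      simp only [EType.mirror] <;> split_ifs <;> simp_all [EType.mirror]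

open Classical in
/-- The edge map of the minimally oriented graph `G^min_<`: starting from
the simplicial graph, each bi-directed edge `v ↔ w` with `Bd v ⊆ Bd w`
and `v < w` is replaced by `v → w`. -/
noncomputable def gminE [LinearOrder V] (v w : V) : EType :=
  match G.dropE v w with
  | .bidir =>
      if G.Bd v ⊆ G.Bd w ∧ v < w then .arrowTo
      else if G.Bd w ⊆ G.Bd v ∧ w < v then .arrowFrom
      else .bidir
  | e => e

/-- The graph `G^min_<` produced by Algorithm 4.2 from `G` and the total
order on `V`. -/
noncomputable def gmin [LinearOrder V] : MixedGraph V where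
  E := G.gminE
  no_loop v := by
    have h := G.drop.no_loop v
    simp only [drop] at h
    simp [gminE, h]
  symm v w := by
    have h := G.drop.symm v w
    simp only [drop] at h
    unfold gminE
    rw [h]
    cases hE : G.dropE v w <;> simp only [EType.mirror]
    case bidir =>
      by_cases c1 : G.Bd v ⊆ G.Bd w ∧ v < w
      · have c2 : ¬ (G.Bd w ⊆ G.Bd v ∧ w < v) := fun h' => lt_asymm c1.2 h'.2
        simp [c1, c2, EType.mirror]
      · by_cases c2 : G.Bd w ⊆ G.Bd v ∧ w < v
        · simp [c1, c2, EType.mirror]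
        · simp [c1, c2, EType.mirror]

/-- Total number of arrowheads of `G`: the number of directed edges plus
twice the number of bi-directed edges. -/
noncomputable def arr : ℕ :=
  {p : V × V | G.Dir p.1 p.2}.ncard + {p : V × V | G.Bidir p.1 p.2}.ncard

end MixedGraph

/-- `Gm` is a minimally oriented graph for `G`. -/
def MinOriented {V : Type} (G Gm : MixedGraph V) : Prop :=
  Gm.Ancestral ∧ Gm.Maximal ∧ G.MarkovEquiv Gm ∧
  ∀ H : MixedGraph V, H.Ancestral → H.Maximal → G.MarkovEquiv H → Gm.arr ≤ H.arr

/-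
In a bi-directed graph every inner vertex of a path is a collider, so a path m-connects given `C`
iff all its inner vertices lie in `C`; in an undirected graph no vertex is a collider, so a path
m-connects given `C` iff none of its inner vertices lies in `C`. If `v` is not simplicial, it has
non-adjacent neighbours `a`, `c`, which `G` separates given `∅` but connects given `{v}`: no
undirected graph can do that, since any path connecting given `{v}` also connects given `∅`.
Conversely, if every vertex is simplicial then adjacency is transitive, the components are
complete, and both `G` and `Gˢ` separate two distinct vertices (given any set) exactly when they
are non-adjacent.
-/

lemma EType.mirror_eq_none_iff {e : EType} : e.mirror = .none ↔ e = .none := by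
  cases e <;> simp [EType.mirror]

lemma ConsecTriple.isChain {V : Type} {R : V → V → Prop} {p : List V} {a b c : V}
    (h : ConsecTriple p a b c) (hp : p.IsChain R) : R a b ∧ R b c := by
  obtain ⟨l₁, l₂, rfl⟩ := h
  have h' := List.isChain_cons_cons.mp hp.right_of_append
  exact ⟨h'.1, (List.isChain_cons_cons.mp h'.2).1⟩

lemma ConsecTriple.middle_eq_of_triple {V : Type} {a b c a' b' c' : V}
    (h : ConsecTriple [a, b, c] a' b' c') : b' = b := by
  obtain ⟨l₁, l₂, h⟩ := h
  rcases l₁ with _ | ⟨x, l₁⟩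
  · simp only [List.nil_append, List.cons.injEq] at h
    exact h.2.1.symm
  · have := congrArg List.length h
    simp only [List.length_cons, List.length_append, List.length_nil] at this
    omega

lemma List.IsChain.reflTransGen_of_head?_of_getLast? {α : Type} {R : α → α → Prop}
    {p : List α} {v w : α} (hp : p.IsChain R) (hv : p.head? = some v)
    (hw : p.getLast? = some w) : Relation.ReflTransGen R v w := by
  obtain ⟨q, rfl⟩ := List.head?_eq_some_iff.mp hv
  exact List.relationReflTransGen_of_exists_isChain_cons q hp
    (Option.some_injective _ ((List.getLast?_eq_some_getLast _).symm.trans hw))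

namespace MixedGraph

variable {V : Type} {G : MixedGraph V} {v w : V}

lemma not_adj_self (v : V) : ¬ G.Adj v v := fun h => h (G.no_loop v)

lemma Adj.ne (h : G.Adj v w) : v ≠ w := by
  rintro rfl
  exact not_adj_self v h

lemma Adj.symm (h : G.Adj v w) : G.Adj w v := by
  rw [Adj, G.symm]
  exact fun h' => h (EType.mirror_eq_none_iff.mp h')

lemma adj_of_simplicial {u : V} (hv : G.Simplicial v) (hu : G.Adj v u) (hw : G.Adj v w)
    (huw : u ≠ w) : G.Adj u w :=
  hv u (Set.mem_insert_of_mem _ hu) w (Set.mem_insert_of_mem _ hw) huw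

lemma exists_of_not_simplicial (hv : ¬ G.Simplicial v) :
    ∃ a c, a ≠ c ∧ G.Adj v a ∧ G.Adj v c ∧ ¬ G.Adj a c := by
  simp only [Simplicial, Complete, Bd, Set.mem_insert_iff, not_forall] at hv
  obtain ⟨a, ha, c, hc, hac, hnadj⟩ := hv
  rcases ha with rfl | ha
  · rcases hc with rfl | hc
    · exact absurd rfl hac
    · exact absurd hc hnadj
  · rcases hc with rfl | hc
    · exact absurd ha.symm hnadj
    · exact ⟨a, c, hac, ha, hc, hnadj⟩

lemma mconn_of_adj (C : Set V) (hvw : G.Adj v w) : G.MConn v w C := by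
  refine ⟨[v, w], ⟨⟨by simp [hvw.ne], List.isChain_pair.mpr hvw⟩, ?_⟩, rfl, rfl⟩
  rintro a b c ⟨l₁, l₂, h⟩
  have := congrArg List.length h
  simp only [List.length_cons, List.length_append, List.length_nil] at this
  omega

def adjSetoid (hS : ∀ v, G.Simplicial v) : Setoid V where
  r v w := v = w ∨ G.Adj v w
  iseqv := by
    refine ⟨fun _ => Or.inl rfl, fun h => h.imp Eq.symm Adj.symm, ?_⟩
    rintro u v w (rfl | huv) (rfl | hvw)
    · exact Or.inl rfl
    · exact Or.inr hvw
    · exact Or.inr huv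
    · by_cases huw : u = w
      · exact Or.inl huw
      · exact Or.inr (adj_of_simplicial (hS v) huv.symm hvw huw)

lemma msep_iff_not_adj (hS : ∀ v, G.Simplicial v) (C : Set V) (hvw : v ≠ w) :
    G.MSep v w C ↔ ¬ G.Adj v w := by
  refine ⟨fun hsep hadj => hsep (mconn_of_adj C hadj), ?_⟩
  rintro hnadj ⟨p, ⟨⟨-, hp⟩, -⟩, hv, hw⟩
  have hrel : (adjSetoid hS) v w := Relation.reflTransGen_le_of_equivalence_of_le
    (adjSetoid hS).iseqv (fun _ _ => Or.inr) _ _ (hp.reflTransGen_of_head?_of_getLast? hv hw)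
  exact hrel.elim hvw hnadj

lemma forall_simplicial_iff_exists_partition :
    (∀ v, G.Simplicial v) ↔
      ∃ (ι : Type) (A : ι → Set V),
        (∀ v : V, ∃! i : ι, v ∈ A i) ∧
        (∀ (i j : ι) (v w : V), v ∈ A i → w ∈ A j → G.Adj v w → i = j) ∧
        (∀ i : ι, G.Complete (A i)) := by
  constructor
  · intro hS
    let s := adjSetoid hS
    refine ⟨Quotient s, fun i => {v | Quotient.mk s v = i}, fun v => ⟨_, rfl, fun _ h => h.symm⟩,
      ?_, ?_⟩
    · rintro i j v w rfl rfl hvw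
      exact Quotient.sound (Or.inr hvw)
    · rintro i v rfl w hw hvw
      exact (Quotient.exact hw.symm).resolve_left hvw
  · rintro ⟨ι, A, hA, hsame, hcomp⟩ v
    obtain ⟨i, hvi, -⟩ := hA v
    have hBd : G.Bd v ⊆ A i := by
      rintro x (rfl | hvx)
      · exact hvi
      · obtain ⟨j, hxj, -⟩ := hA x
        rwa [hsame i j v x hvi hxj hvx]
    exact fun a ha c hc => hcomp i a (hBd ha) c (hBd hc)

lemma drop_adj_iff : G.drop.Adj v w ↔ G.Adj v w := by
  refine not_congr ?_
  change G.dropE v w = .none ↔ G.E v w = .none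
  unfold dropE
  cases G.E v w <;> simp only [reduceCtorEq] <;> split_ifs <;> simp

lemma simplicial_drop_iff : G.drop.Simplicial v ↔ G.Simplicial v := by
  simp only [Simplicial, Complete, Bd, drop_adj_iff]

lemma markovEquiv_drop (hS : ∀ v, G.Simplicial v) : G.MarkovEquiv G.drop := by
  intro v w C hvw _ _
  rw [msep_iff_not_adj hS C hvw,
    msep_iff_not_adj (fun u => simplicial_drop_iff.mpr (hS u)) C hvw, drop_adj_iff]

namespace UndirectedG

variable {U : MixedGraph V}

lemma not_collider (hU : U.UndirectedG) (a b c : V) : ¬ U.Collider a b c := by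
  rintro ⟨hab | hab, -⟩ <;> rcases hU a b with h | h <;> simp [h] at hab

lemma isMConnPath_iff (hU : U.UndirectedG) (C : Set V) (p : List V) :
    U.IsMConnPath C p ↔ U.IsPath p ∧ ∀ a b c, ConsecTriple p a b c → b ∉ C := by
  simp [IsMConnPath, hU.not_collider]

lemma mconn_empty (hU : U.UndirectedG) {C : Set V} (h : U.MConn v w C) : U.MConn v w ∅ := by
  obtain ⟨p, hp, hv, hw⟩ := h
  refine ⟨p, (hU.isMConnPath_iff ∅ p).mpr ⟨((hU.isMConnPath_iff C p).mp hp).1, ?_⟩, hv, hw⟩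
  exact fun _ b _ _ => Set.notMem_empty b

end UndirectedG

namespace Bidirected

lemma eq_bidir_of_adj (hG : G.Bidirected) (h : G.Adj v w) : G.E v w = .bidir :=
  (hG v w).resolve_left h

lemma anc_iff_eq (hG : G.Bidirected) : G.Anc v w ↔ v = w := by
  refine ⟨fun h => ?_, fun h => h ▸ Relation.ReflTransGen.refl⟩
  cases h.cases_tail with
  | inl h => exact h.symm
  | inr h =>
    obtain ⟨u, -, hu⟩ := h
    rcases hG u w with h' | h' <;> simp [Dir, h'] at hu

lemma anSet_eq (hG : G.Bidirected) (C : Set V) : G.anSet C = C := by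
  ext v
  simp [anSet, hG.anc_iff_eq]

lemma collider (hG : G.Bidirected) {a b c : V} (hab : G.Adj a b) (hbc : G.Adj b c) :
    G.Collider a b c :=
  ⟨Or.inr (hG.eq_bidir_of_adj hab), Or.inr (hG.eq_bidir_of_adj hbc.symm)⟩

lemma isMConnPath_iff (hG : G.Bidirected) (C : Set V) (p : List V) :
    G.IsMConnPath C p ↔ G.IsPath p ∧ ∀ a b c, ConsecTriple p a b c → b ∈ C := by
  refine and_congr_right fun hp => forall₃_congr fun a b c => imp_congr_right fun h => ?_
  have hcol := hG.collider (h.isChain hp.2).1 (h.isChain hp.2).2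
  simp [hcol, hG.anSet_eq]

lemma msep_empty (hG : G.Bidirected) (hvw : v ≠ w) (hnadj : ¬ G.Adj v w) : G.MSep v w ∅ := by
  rintro ⟨p, hp, hv, hw⟩
  rw [hG.isMConnPath_iff] at hp
  obtain ⟨⟨-, hchain⟩, hinner⟩ := hp
  match p, hv, hw with
  | [x], hv, hw => exact hvw (Option.some_injective _ (hv.symm.trans hw))
  | [x, y], hv, hw =>
    cases hv; cases hw
    exact hnadj (List.isChain_pair.mp hchain)
  | x :: y :: z :: r, _, _ => exact hinner x y z ⟨[], r, rfl⟩

lemma mconn_singleton (hG : G.Bidirected) {a c : V} (hac : a ≠ c) (hva : G.Adj v a)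
    (hvc : G.Adj v c) :
    G.MConn a c {v} := by
  refine ⟨[a, v, c], (hG.isMConnPath_iff _ _).mpr ⟨⟨?_, ?_⟩, ?_⟩, rfl, rfl⟩
  · simp [hac, hva.ne.symm, hvc.ne]
  · exact List.IsChain.cons_cons hva.symm (List.isChain_pair.mpr hvc)
  · exact fun _ _ _ h => h.middle_eq_of_triple

lemma forall_simplicial_of_markovEquiv (hG : G.Bidirected) {U : MixedGraph V}
    (hU : U.UndirectedG) (hGU : G.MarkovEquiv U) (v : V) : G.Simplicial v := by
  by_contra hv
  obtain ⟨a, c, hac, hva, hvc, hnadj⟩ := exists_of_not_simplicial hv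
  have hU_sep : U.MSep a c ∅ :=
    (hGU a c ∅ hac (Set.notMem_empty a) (Set.notMem_empty c)).mp (hG.msep_empty hac hnadj)
  have hU_conn : U.MConn a c {v} := by
    by_contra hsep
    exact (hGU a c {v} hac (by simpa using hva.ne.symm) (by simpa using hvc.ne.symm)).mpr
      hsep (hG.mconn_singleton hac hva hvc)
  exact hU_sep (hU.mconn_empty hU_conn)

lemma drop_undirectedG_iff (hG : G.Bidirected) : G.drop.UndirectedG ↔ ∀ v, G.Simplicial v := by
  refine ⟨fun hU v => by_contra fun hv => ?_, fun hS v w => ?_⟩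
  · obtain ⟨a, -, -, hva, -, -⟩ := exists_of_not_simplicial hv
    have hdrop : G.dropE v a = .none ∨ G.dropE v a = .undir := hU v a
    simp only [dropE, hG.eq_bidir_of_adj hva, hv, if_false] at hdrop
    split_ifs at hdrop <;> simp at hdrop
  · change G.dropE v w = .none ∨ G.dropE v w = .undir
    rcases hG v w with h | h <;> simp [dropE, h, hS v, hS w]

end Bidirected

end MixedGraph

/-- A bi-directed graph `G` is Markov equivalent to some
undirected graph iff its simplicial graph `Gˢ` is undirected, which holds
iff `G` is a disjoint union of complete (bi-directed) graphs. -/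
theorem stmt10 {V : Type} (G : MixedGraph V) (hG : G.Bidirected) :
    ((∃ U : MixedGraph V, U.UndirectedG ∧ G.MarkovEquiv U) ↔ (G.drop).UndirectedG) ∧
    ((G.drop).UndirectedG ↔
      ∃ (ι : Type) (A : ι → Set V),
        (∀ v : V, ∃! i : ι, v ∈ A i) ∧
        (∀ (i j : ι) (v w : V), v ∈ A i → w ∈ A j → G.Adj v w → i = j) ∧
        (∀ i : ι, G.Complete (A i))) := by
  rw [hG.drop_undirectedG_iff]
  refine ⟨⟨fun ⟨U, hU, hGU⟩ => hG.forall_simplicial_of_markovEquiv hU hGU, fun hS => ?_⟩,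
    MixedGraph.forall_simplicial_iff_exists_partition⟩
  exact ⟨G.drop, hG.drop_undirectedG_iff.mpr hS, MixedGraph.markovEquiv_drop hS⟩
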